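/- arXiv:2510.02005 — 5 statements merged into one kernel-verified Lean document; each statement's English description precedes it below -/
import Mathlib

section
/- For all positive integers a and b with b ≤ a, the falling factorial satisfies a(a-1)⋯(a-b+1) > (a/e)^b. -/
open Finset in
lemma fact_gt_pow (b : ℕ) (hb : 0 < b) :
    ((b : ℝ) / Real.exp 1) ^ b < b.factorial := by
  have hbR : (0:ℝ) < b := by exact_mod_cast hb
  have hfac : (0:ℝ) < b.factorial := by exact_mod_cast b.factorial_pos
  rw [div_pow, div_lt_iff₀ (by positivity), Real.exp_one_pow]
  have h1 : (b:ℝ)^b / b.factorial + 1 ≤ ∑ i ∈ range (b+1), (b:ℝ)^i / i.factorial := by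
    rw [Finset.sum_range_succ]
    have h2 : (1:ℝ) ≤ ∑ i ∈ range b, (b:ℝ)^i / i.factorial := by
      have := Finset.single_le_sum (f := fun i => (b:ℝ)^i / i.factorial)
        (fun i _ => by positivity) (Finset.mem_range.mpr hb)
      simpa using this
    linarith
  have h3 := Real.sum_le_exp_of_nonneg (x := (b:ℝ)) hbR.le (b+1)
  have h4 : (b:ℝ)^b / b.factorial + 1 ≤ Real.exp b := le_trans h1 h3
  have h5 : (b:ℝ)^b / b.factorial < Real.exp b := by linarith
  calc (b:ℝ)^b = ((b:ℝ)^b / b.factorial) * b.factorial := by field_simp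
    _ < Real.exp b * b.factorial := by exact mul_lt_mul_of_pos_right h5 hfac
    _ = b.factorial * Real.exp b := mul_comm _ _

open Finset in
lemma desc_ge (a b : ℕ) (hb : 0 < b) (hba : b ≤ a) :
    (b.factorial : ℝ) * ((a:ℝ)/(b:ℝ))^b ≤ a.descFactorial b := by
  have hbR : (0:ℝ) < b := by exact_mod_cast hb
  have haR : (0:ℝ) < a := by exact_mod_cast lt_of_lt_of_le hb hba
  have hfact : (b.factorial : ℝ) = ∏ i ∈ range b, ((b - i : ℕ) : ℝ) := by
    rw [← Nat.descFactorial_self, Nat.descFactorial_eq_prod_range]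
    push_cast
    rfl
  have hdesc : (a.descFactorial b : ℝ) = ∏ i ∈ range b, ((a - i : ℕ) : ℝ) := by
    rw [Nat.descFactorial_eq_prod_range]
    push_cast
    rfl
  have hre : (∏ i ∈ range b, ((b - i : ℕ) : ℝ)) * ((a:ℝ)/(b:ℝ))^b
      = ∏ i ∈ range b, (((b - i : ℕ) : ℝ) * ((a:ℝ)/(b:ℝ))) := by
    rw [Finset.prod_mul_distrib, Finset.prod_const, Finset.card_range]
  rw [hfact, hdesc, hre]
  apply Finset.prod_le_prod
  · intro i _
    positivity
  · intro i hi
    have hib : i < b := Finset.mem_range.mp hi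
    rw [Nat.cast_sub hib.le, Nat.cast_sub (hib.le.trans hba)]
    have hiR : (0:ℝ) ≤ i := by positivity
    have hbaR : (b:ℝ) ≤ a := by exact_mod_cast hba
    rw [← mul_div_assoc, div_le_iff₀ hbR]
    nlinarith

/-- For all positive integers `a, b` with `b ≤ a`, the falling factorial satisfies
`(a)_b = a(a-1)⋯(a-b+1) > (a/e)^b`. -/
theorem falling_factorial_gt (a b : ℕ) (ha : 0 < a) (hb : 0 < b) (hba : b ≤ a) :
    ((a : ℝ) / Real.exp 1) ^ b < (a.descFactorial b : ℝ) := by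
  have hbR : (0:ℝ) < b := by exact_mod_cast hb
  have haR : (0:ℝ) < a := by exact_mod_cast ha
  have key : ((a:ℝ) / Real.exp 1) ^ b = ((b:ℝ)/Real.exp 1)^b * ((a:ℝ)/(b:ℝ))^b := by
    rw [← mul_pow]
    congr 1
    field_simp
  rw [key]
  calc ((b:ℝ)/Real.exp 1)^b * ((a:ℝ)/(b:ℝ))^b
      < (b.factorial : ℝ) * ((a:ℝ)/(b:ℝ))^b := by
        exact mul_lt_mul_of_pos_right (fact_gt_pow b hb) (by positivity)
    _ ≤ a.descFactorial b := desc_ge a b hb hba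
end

section
/- If H is a q-sparse graph on n vertices, then the maximum degree of H is at most max{log₂ n, 2enq}. In particular, if q ≥ (log₂ n)/n, then Δ_H ≤ 2enq. -/
/-
A vertex `v` of maximum degree `d` spans a star `K_{1,d}` in `H`, so `q`-sparseness gives
`1 ≤ E_q X_{K_{1,d}}`. Precomposing a labelled copy with the `d!` automorphisms permuting the
leaves does not change its image, so `K_n` has at most `n^{d+1} / d!` copies of the star, whence
`1 ≤ n (nq)^d / d!`. If `d > log₂ n` then `n < 2^d`, and `d! ≥ (d/e)^d` turns this into
`1 < (2enq/d)^d`, i.e. `d < 2enq`.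
-/

open SimpleGraph

/-- Number of (unlabeled) copies of `J` in `G`: subgraphs of `G` isomorphic to `J`. -/
noncomputable def copyCount {α β : Type*} (J : SimpleGraph α) (G : SimpleGraph β) : ℕ :=
  Set.ncard {A : G.Subgraph | Nonempty (A.coe ≃g J)}

/-- Expected number of copies of `J` in the Erdős–Rényi random graph `G(n,q)`. -/
noncomputable def expCopies {α : Type*} (n : ℕ) (J : SimpleGraph α) (q : ℝ) : ℝ :=
  (copyCount J (⊤ : SimpleGraph (Fin n)) : ℝ) * q ^ (Set.ncard J.edgeSet)

/-- `H` is `q`-sparse: every subgraph `I ⊆ H` has `E_q X_I ≥ 1`. -/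
def qSparse {n : ℕ} (q : ℝ) (H : SimpleGraph (Fin n)) : Prop :=
  ∀ I : H.Subgraph, 1 ≤ expCopies n I.coe q

open scoped Nat

namespace SimpleGraph

variable {V W : Type*} {G : SimpleGraph V} {H : SimpleGraph W}

instance [Finite V] {G' : SimpleGraph W} : Finite (G ≃g G') :=
  Finite.of_injective (fun e : G ≃g G' => e.toEquiv) fun _ _ h => RelIso.ext (Equiv.ext_iff.1 h)

lemma Subgraph.map_top_of_iso {U : Type*} {K : SimpleGraph U} (e : H ≃g K) :
    (⊤ : H.Subgraph).map e.toHom = ⊤ := by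
  ext <;> simp

@[simp] lemma Copy.toSubgraph_comp_iso {U : Type*} {K : SimpleGraph U} (f : Copy H G)
    (e : K ≃g H) :
    (f.comp e.toCopy).toSubgraph = f.toSubgraph := by
  show Subgraph.map (f.toHom.comp e.toHom) ⊤ = _
  rw [Subgraph.map_comp, Subgraph.map_top_of_iso]

/-- The automorphisms of `H` act freely, by precomposition, on the copies of `H` with a given
image. -/
lemma copyCount_mul_card_iso_le_labelledCopyCount [Fintype V] [Fintype W] :
    G.copyCount H * Nat.card (H ≃g H) ≤ G.labelledCopyCount H := by
  classical
  have hrange (A : {A : G.Subgraph // Nonempty (H ≃g A.coe)}) :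
      ∃ f : Copy H G, f.toSubgraph = A := by
    rw [← Set.mem_range, Copy.range_toSubgraph]
    exact A.2
  choose f hf using hrange
  have hinj : Function.Injective fun p : {A : G.Subgraph // Nonempty (H ≃g A.coe)} × (H ≃g H) =>
      (f p.1).comp p.2.toCopy := by
    rintro ⟨A, σ⟩ ⟨B, τ⟩ h
    obtain rfl : A = B := Subtype.ext (by simpa [hf] using congrArg Copy.toSubgraph h)
    refine Prod.ext rfl (RelIso.ext fun w => (f A).injective ?_)
    simpa [Copy.comp_apply] using DFunLike.congr_fun h w
  have := Nat.card_le_card_of_injective _ hinj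
  rw [Nat.card_prod] at this
  convert this
  · simp [copyCount, Nat.card_eq_fintype_card, Fintype.card_subtype]
  · simp [labelledCopyCount, Nat.card_eq_fintype_card]

lemma labelledCopyCount_top [Fintype V] [Fintype W] :
    (⊤ : SimpleGraph V).labelledCopyCount H =
      (Fintype.card V).descFactorial (Fintype.card W) := by
  classical
  let e : Copy H ⊤ ≃ (W ↪ V) :=
    { toFun f := f.toEmbedding
      invFun g := ⟨⟨g, fun h => g.injective.ne h.ne⟩, g.injective⟩
      left_inv _ := rfl
      right_inv _ := rfl }
  rw [← Fintype.card_embedding_eq, labelledCopyCount]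
  convert Fintype.card_congr e

lemma factorial_mul_factorial_le_card_iso_completeBipartiteGraph [Fintype V] [Fintype W] :
    (Fintype.card V)! * (Fintype.card W)! ≤
      Nat.card (completeBipartiteGraph V W ≃g completeBipartiteGraph V W) := by
  have hinj : Function.Injective fun p : Equiv.Perm V × Equiv.Perm W =>
      completeBipartiteGraphCongr p.1 p.2 := by
    rintro ⟨σ, τ⟩ ⟨σ', τ'⟩ h
    simp only [Prod.mk.injEq]
    constructor <;> ext x
    · simpa using DFunLike.congr_fun h (Sum.inl x)
    · simpa using DFunLike.congr_fun h (Sum.inr x)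
  simpa [Nat.card_prod, Nat.card_perm, Nat.card_eq_fintype_card] using
    Nat.card_le_card_of_injective _ hinj

lemma ncard_edgeSet_completeBipartiteGraph [Fintype V] [Fintype W] :
    (completeBipartiteGraph V W).edgeSet.ncard = Fintype.card V * Fintype.card W := by
  simp [Set.ncard, encard_edgeSet_completeBipartiteGraph, ENat.card_eq_coe_fintype_card]

noncomputable def starCopy (G : SimpleGraph V) (v : V) [Fintype (G.neighborSet v)] :
    Copy (completeBipartiteGraph (Fin 1) (Fin (G.degree v))) G :=
  Copy.completeBipartiteGraph {v} (G.neighborFinset v) (by simp) (by simp)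
    (by simp [IsCompleteBetween])

end SimpleGraph

lemma copyCount_eq_simpleGraphCopyCount {α β : Type*} [Fintype β] (J : SimpleGraph α)
    (G : SimpleGraph β) : _root_.copyCount J G = G.copyCount J := by
  classical
  rw [_root_.copyCount, SimpleGraph.copyCount, ← Set.ncard_coe_finset]
  congr 1
  ext A
  simp only [Finset.coe_filter, Finset.mem_univ, true_and]
  exact ⟨fun ⟨e⟩ => ⟨e.symm⟩, fun ⟨e⟩ => ⟨e.symm⟩⟩

lemma copyCount_congr {α α' β : Type*} {J : SimpleGraph α} {J' : SimpleGraph α'} (e : J ≃g J')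
    (G : SimpleGraph β) : _root_.copyCount J G = _root_.copyCount J' G := by
  unfold _root_.copyCount
  congr 1
  ext A
  exact ⟨fun ⟨f⟩ => ⟨f.trans e⟩, fun ⟨f⟩ => ⟨f.trans e.symm⟩⟩

lemma expCopies_congr {α α' : Type*} {J : SimpleGraph α} {J' : SimpleGraph α'} (e : J ≃g J')
    (n : ℕ) (q : ℝ) : expCopies n J q = expCopies n J' q := by
  have hedges : J.edgeSet.ncard = J'.edgeSet.ncard := by
    rw [← Nat.card_coe_set_eq, ← Nat.card_coe_set_eq]
    exact Nat.card_congr e.mapEdgeSet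
  rw [expCopies, expCopies, copyCount_congr e, hedges]

lemma expCopies_completeBipartiteGraph_le {V W : Type*} [Fintype V] [Fintype W] (n : ℕ) {q : ℝ}
    (hq : 0 ≤ q) :
    expCopies n (completeBipartiteGraph V W) q ≤
      n ^ (Fintype.card V + Fintype.card W) * q ^ (Fintype.card V * Fintype.card W) /
        ((Fintype.card V)! * (Fintype.card W)!) := by
  have hcount : _root_.copyCount (completeBipartiteGraph V W) (⊤ : SimpleGraph (Fin n)) *
      ((Fintype.card V)! * (Fintype.card W)!) ≤ n ^ (Fintype.card V + Fintype.card W) :=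
    calc _ ≤ _ * Nat.card (completeBipartiteGraph V W ≃g completeBipartiteGraph V W) :=
          Nat.mul_le_mul_left _ factorial_mul_factorial_le_card_iso_completeBipartiteGraph
      _ ≤ (⊤ : SimpleGraph (Fin n)).labelledCopyCount (completeBipartiteGraph V W) := by
          rw [copyCount_eq_simpleGraphCopyCount]
          exact copyCount_mul_card_iso_le_labelledCopyCount
      _ ≤ n ^ (Fintype.card V + Fintype.card W) := by
          rw [labelledCopyCount_top, Fintype.card_fin, Fintype.card_sum]
          exact Nat.descFactorial_le_pow _ _
  rw [le_div_iff₀ (by positivity), expCopies, ncard_edgeSet_completeBipartiteGraph,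
    mul_right_comm]
  gcongr
  exact_mod_cast hcount

lemma Real.pow_div_factorial_le_exp_one_mul_div_pow {x : ℝ} (hx : 0 ≤ x) (d : ℕ) :
    x ^ d / d ! ≤ (Real.exp 1 * x / d) ^ d := by
  rcases Nat.eq_zero_or_pos d with rfl | hd
  · simp
  have hd' : (0 : ℝ) < (d : ℝ) ^ d := by positivity
  calc x ^ d / d ! = x ^ d / (d : ℝ) ^ d * ((d : ℝ) ^ d / d !) := by field_simp
    _ ≤ x ^ d / (d : ℝ) ^ d * Real.exp 1 ^ d := by
        gcongr
        rw [Real.exp_one_pow]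
        exact Real.pow_div_factorial_le_exp _ d.cast_nonneg d
    _ = (Real.exp 1 * x / d) ^ d := by ring

lemma natCast_le_two_mul_exp_one_mul_of_one_le {N x : ℝ} {d : ℕ} (hx : 0 ≤ x) (hN : N < 2 ^ d)
    (h : 1 ≤ N * x ^ d / d !) : d ≤ 2 * Real.exp 1 * x := by
  by_contra! hlt
  have hbase : 0 ≤ 2 * Real.exp 1 * x / d := by positivity
  have hd : d ≠ 0 := by rintro rfl; rw [Nat.cast_zero] at hlt; exact hlt.not_ge (by positivity)
  have : (1 : ℝ) < 1 := calc
    1 ≤ N * x ^ d / d ! := h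
    _ ≤ 2 ^ d * x ^ d / d ! := by gcongr
    _ = (2 * x) ^ d / d ! := by rw [mul_pow]
    _ ≤ (Real.exp 1 * (2 * x) / d) ^ d :=
        Real.pow_div_factorial_le_exp_one_mul_div_pow (by positivity) d
    _ = (2 * Real.exp 1 * x / d) ^ d := by ring
    _ < 1 := pow_lt_one₀ hbase ((div_lt_one (by positivity)).2 hlt) hd
  exact lt_irrefl 1 this

variable {n : ℕ} {q : ℝ} {H : SimpleGraph (Fin n)} [DecidableRel H.Adj]

lemma qSparse.one_le_mul_pow_degree_div_factorial (hq : 0 ≤ q) (hH : qSparse q H) (v : Fin n) :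
    1 ≤ n * (n * q) ^ H.degree v / (H.degree v)! :=
  calc 1 ≤ expCopies n (H.starCopy v).toSubgraph.coe q := hH _
    _ = expCopies n (completeBipartiteGraph (Fin 1) (Fin (H.degree v))) q :=
        (expCopies_congr (H.starCopy v).isoToSubgraph n q).symm
    _ ≤ _ := expCopies_completeBipartiteGraph_le n hq
    _ = n * (n * q) ^ H.degree v / (H.degree v)! := by
        simp only [Fintype.card_fin, Nat.factorial_one, one_mul, Nat.cast_one]
        ring

lemma qSparse.degree_le (hq : 0 ≤ q) (hH : qSparse q H) (v : Fin n) :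
    (H.degree v : ℝ) ≤ max (Real.logb 2 n) (2 * Real.exp 1 * n * q) := by
  by_cases hlog : (H.degree v : ℝ) ≤ Real.logb 2 n
  · exact le_max_of_le_left hlog
  have hn : (n : ℝ) < 2 ^ H.degree v := by
    have hn0 : (0 : ℝ) < n := by exact_mod_cast v.pos
    simpa [Real.rpow_natCast] using
      (Real.logb_lt_iff_lt_rpow one_lt_two hn0).1 (not_le.1 hlog)
  refine le_max_of_le_right ?_
  rw [mul_assoc _ (n : ℝ)]
  exact natCast_le_two_mul_exp_one_mul_of_one_le (by positivity) hn
    (hH.one_le_mul_pow_degree_div_factorial hq v)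

theorem maxDegree_of_qSparse_general (n : ℕ) (q : ℝ) (hq0 : 0 ≤ q)
    (H : SimpleGraph (Fin n)) [DecidableRel H.Adj] (hH : qSparse q H) :
    (H.maxDegree : ℝ) ≤ max (Real.logb 2 n) (2 * Real.exp 1 * n * q) ∧
      (Real.logb 2 n / n ≤ q → (H.maxDegree : ℝ) ≤ 2 * Real.exp 1 * n * q) := by
  have hbound : (H.maxDegree : ℝ) ≤ max (Real.logb 2 n) (2 * Real.exp 1 * n * q) := by
    have hM : 0 ≤ max (Real.logb 2 n) (2 * Real.exp 1 * n * q) :=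
      le_max_of_le_right (by positivity)
    calc (H.maxDegree : ℝ) ≤ ⌊max (Real.logb 2 n) (2 * Real.exp 1 * n * q)⌋₊ := by
          exact_mod_cast H.maxDegree_le_of_forall_degree_le _
            fun v => Nat.le_floor (hH.degree_le hq0 v)
      _ ≤ _ := Nat.floor_le hM
  refine ⟨hbound, fun hlogq => hbound.trans (max_le ?_ le_rfl)⟩
  rcases Nat.eq_zero_or_pos n with rfl | hn
  · simp
  have hn' : (0 : ℝ) < n := by exact_mod_cast hn
  calc Real.logb 2 n ≤ n * q := (div_le_iff₀' hn').1 hlogq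
    _ ≤ 2 * Real.exp 1 * (n * q) :=
        le_mul_of_one_le_left (by positivity) (by linarith [Real.add_one_le_exp 1])
    _ = 2 * Real.exp 1 * n * q := by ring

/-- If `H` is `q`-sparse on `n` vertices then `Δ_H ≤ max {log₂ n, 2enq}`; in particular,
if `q ≥ log₂ n / n` then `Δ_H ≤ 2enq`. -/
theorem maxDegree_of_qSparse (n : ℕ) (q : ℝ) (hq0 : 0 ≤ q) (hq1 : q ≤ 1)
    (H : SimpleGraph (Fin n)) [DecidableRel H.Adj] (hH : qSparse q H) :
    (H.maxDegree : ℝ) ≤ max (Real.logb 2 n) (2 * Real.exp 1 * n * q) ∧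
      (Real.logb 2 n / n ≤ q → (H.maxDegree : ℝ) ≤ 2 * Real.exp 1 * n * q) :=
  maxDegree_of_qSparse_general n q hq0 H hH
end

section
/- If H is a q-sparse graph on n vertices, then H has fewer than n·log₂ n edges; and if in addition q ≤ n^{-c} for some c > 0, then H has fewer than n/c edges. -/
open SimpleGraph

/-!
Sparseness applied to `I = H` itself gives `1 ≤ E_q X_H < n^n q^{e(H)}`, because `H` has at most
`n! < n^n` placements in `K_n`. So `q^{e(H)} > n^{-n}`, which is incompatible with
`q^{e(H)} ≤ 2^{-e(H)}` once `e(H) ≥ n log₂ n`, and with `q^{e(H)} ≤ n^{-c e(H)}` once `e(H) ≥ n/c`.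
-/

namespace SimpleGraph.Subgraph

variable {α β : Type*} {G : SimpleGraph β} {J : SimpleGraph α}

lemma eq_map_top_of_iso (A : G.Subgraph) (e : A.coe ≃g J) :
    A = (⊤ : J.Subgraph).map (A.hom.comp e.symm.toHom) := by
  rw [map_comp, map_iso_top, map_hom_top]

lemma ncard_edgeSet_coe_top (G : SimpleGraph β) :
    (⊤ : G.Subgraph).coe.edgeSet.ncard = G.edgeSet.ncard := by
  rw [← Nat.card_coe_set_eq, ← Nat.card_coe_set_eq]
  exact Nat.card_congr (Iso.mapEdgeSet topIso)

end SimpleGraph.Subgraph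

lemma copyCount_le_descFactorial {α β : Type*} [Fintype α] [Fintype β]
    (J : SimpleGraph α) (G : SimpleGraph β) :
    _root_.copyCount J G ≤ (Fintype.card β).descFactorial (Fintype.card α) := by
  classical
  let placement (A : {A : G.Subgraph // Nonempty (A.coe ≃g J)}) : α ↪ β :=
    ⟨A.1.hom.comp (Classical.choice A.2).symm.toHom,
      Subgraph.hom_injective.comp (Classical.choice A.2).symm.injective⟩
  have placement_injective : Function.Injective placement := fun A B h => Subtype.ext <| by
    rw [A.1.eq_map_top_of_iso (Classical.choice A.2), B.1.eq_map_top_of_iso (Classical.choice B.2)]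
    congr 1
    ext v
    exact DFunLike.congr_fun h v
  rw [_root_.copyCount, ← Nat.card_coe_set_eq, ← Fintype.card_embedding_eq,
    ← Nat.card_eq_fintype_card]
  exact Nat.card_le_card_of_injective placement placement_injective

lemma copyCount_top_lt_pow {n : ℕ} (hn : 2 ≤ n) (H : SimpleGraph (Fin n)) :
    _root_.copyCount (⊤ : H.Subgraph).coe (⊤ : SimpleGraph (Fin n)) < n ^ n := by
  classical
  calc _root_.copyCount (⊤ : H.Subgraph).coe (⊤ : SimpleGraph (Fin n))
      ≤ n.descFactorial (Fintype.card (⊤ : H.Subgraph).verts) := by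
        simpa using copyCount_le_descFactorial (⊤ : H.Subgraph).coe (⊤ : SimpleGraph (Fin n))
    _ = n.descFactorial n := by simp
    _ < n ^ n := Nat.descFactorial_lt_pow (by omega) hn

lemma qSparse.one_lt_pow_mul_pow {n : ℕ} {q : ℝ} {H : SimpleGraph (Fin n)} (hs : qSparse q H)
    (hn : 2 ≤ n) : 1 < (n : ℝ) ^ n * q ^ H.edgeSet.ncard := by
  have hexp := hs ⊤
  rw [expCopies, Subgraph.ncard_edgeSet_coe_top] at hexp
  have hpow : 0 < q ^ H.edgeSet.ncard :=
    pos_of_mul_pos_right (one_pos.trans_le hexp) (Nat.cast_nonneg _)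
  calc 1 ≤ _ := hexp
    _ < (n : ℝ) ^ n * q ^ H.edgeSet.ncard := by
      gcongr
      exact_mod_cast copyCount_top_lt_pow hn H

lemma mul_lt_logb_of_one_lt_mul_pow {b q c X : ℝ} {m : ℕ} (hb : 1 < b) (hq : 0 ≤ q)
    (hqc : q ≤ b ^ (-c)) (hX : 1 < X * q ^ m) : c * m < Real.logb b X := by
  have hb0 : 0 < b := zero_lt_one.trans hb
  have hX0 : 0 < X := pos_of_mul_pos_left (one_pos.trans hX) (pow_nonneg hq m)
  have hdiv : 1 < X / b ^ (c * m) := by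
    calc 1 < X * q ^ m := hX
      _ ≤ X * (b ^ (-c)) ^ m := by gcongr
      _ = X / b ^ (c * m) := by
        rw [← Real.rpow_natCast, ← Real.rpow_mul hb0.le, neg_mul, Real.rpow_neg hb0.le,
          div_eq_mul_inv]
  rw [Real.lt_logb_iff_rpow_lt hb hX0]
  exact (one_lt_div (Real.rpow_pos_of_pos hb0 _)).mp hdiv

/-- If `H` is `q`-sparse on `n` vertices (with `n` sufficiently large and `q ≤ 1/L` for a
sufficiently large constant `L`), then `H` has fewer than `n log₂ n` edges; and if moreover
`q ≤ n^{-c}` for some `c > 0`, then `H` has fewer than `n/c` edges. -/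
theorem edgeCount_of_qSparse :
    ∃ (N : ℕ) (L : ℝ), 0 < L ∧
      ∀ (n : ℕ) (q : ℝ) (H : SimpleGraph (Fin n)), N ≤ n → 0 ≤ q → q ≤ 1 / L →
        qSparse q H →
        (Set.ncard H.edgeSet : ℝ) < n * Real.logb 2 n ∧
        (∀ c : ℝ, 0 < c → q ≤ (n : ℝ) ^ (-c) → (Set.ncard H.edgeSet : ℝ) < n / c) := by
  refine ⟨2, 2, two_pos, fun n q H hn hq hqL hs => ?_⟩
  have hX := hs.one_lt_pow_mul_pow hn
  have hn1 : (1 : ℝ) < n := by exact_mod_cast hn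
  refine ⟨?_, fun c hc hqc => ?_⟩
  · have hq2 : q ≤ (2 : ℝ) ^ (-(1 : ℝ)) := by rwa [Real.rpow_neg_one, ← one_div]
    simpa [Real.logb_pow] using mul_lt_logb_of_one_lt_mul_pow one_lt_two hq hq2 hX
  · have hcm := mul_lt_logb_of_one_lt_mul_pow hn1 hq hqc hX
    rw [Real.logb_pow, Real.logb_self_eq_one hn1, mul_one] at hcm
    rwa [lt_div_iff₀ hc, mul_comm]
end

section
/- If H is a q-sparse graph, then for any graph J, the maximum size ν(H,J) of a collection of pairwise edge-disjoint copies of J in H satisfies ν(H,J) ≤ e · E_q X_J, where E_q X_J is the expected number of copies of J in G_{n,q}. -/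
open SimpleGraph

/-!
Let `t = |S|`, `m = e(J)` and let `I` be the union of the copies in `S`. Edge-disjointness gives
`e(I) = t m`, so sparsity yields `1 ≤ N_I q^{tm}`, where `N_X` counts copies of `X` in `K_n`.
A copy of `I` in `K_n` is the union of the `t` copies of `J` onto which it carries the members
of `S`, so `N_I ≤ C(N_J, t)`. Hence `t! ≤ N_J^t q^{tm} = (E_q X_J)^t`, and `t^t ≤ e^t t!`
turns this into `t ≤ e · E_q X_J`.
-/

namespace SimpleGraph.Subgraph

variable {V W : Type*} {G : SimpleGraph V} {G' : SimpleGraph W}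

lemma comap_map_of_injective {f : G →g G'} (hf : Function.Injective f) (A : G.Subgraph) :
    (A.map f).comap f = A := by
  ext u v
  · simp [hf.mem_set_image]
  · simp only [comap_adj, map_adj, Relation.map_apply, hf.eq_iff, exists_eq_right_right,
      exists_eq_right, and_iff_right_iff_imp]
    exact fun h => A.adj_sub h

lemma map_injective_of_injective {f : G →g G'} (hf : Function.Injective f) :
    Function.Injective (Subgraph.map f) :=
  Function.LeftInverse.injective (comap_map_of_injective hf)

lemma map_finset_sup {ι : Type*} (f : G →g G') (s : Finset ι) (A : ι → G.Subgraph) :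
    (s.sup A).map f = s.sup (Subgraph.map f ∘ A) :=
  Finset.apply_sup_eq_sup_comp _ (map_sup f)
    (GaloisConnection.l_bot fun B B' => map_le_iff_le_comap f B B')

lemma coeSubgraph_restrict_of_le {I A : G.Subgraph} (h : A ≤ I) :
    Subgraph.coeSubgraph (I.restrict A) = A := by
  rw [coeSubgraph_restrict_eq, inf_eq_right.mpr h]

lemma ncard_edgeSet_coe (A : G.Subgraph) : A.coe.edgeSet.ncard = A.edgeSet.ncard := by
  rw [← image_coe_edgeSet_coe]
  exact (Set.ncard_image_of_injective _ (Sym2.map.injective Subtype.val_injective)).symm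

lemma ncard_edgeSet_eq_of_iso {α : Type*} {J : SimpleGraph α} {A : G.Subgraph}
    (e : A.coe ≃g J) : A.edgeSet.ncard = J.edgeSet.ncard := by
  rw [← ncard_edgeSet_coe, ← Nat.card_coe_set_eq, ← Nat.card_coe_set_eq]
  exact Nat.card_congr e.mapEdgeSet

lemma ncard_edgeSet_finset_sup [Finite V] (S : Finset G.Subgraph)
    (hS : (S : Set G.Subgraph).PairwiseDisjoint edgeSet) :
    (S.sup id).edgeSet.ncard = ∑ A ∈ S, A.edgeSet.ncard := by
  have hunion : (S.sup id).edgeSet = ⋃ A ∈ S, A.edgeSet := by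
    simp only [Finset.sup_eq_iSup, edgeSet_iSup, id]
  rw [hunion, ← Finset.set_biUnion_coe,
    S.finite_toSet.ncard_biUnion (fun _ _ => Set.toFinite _) hS, finsum_mem_coe_finset]

end SimpleGraph.Subgraph

section Counting

variable {α β γ : Type*} {J : SimpleGraph α} {F : SimpleGraph β} {K : SimpleGraph γ}

theorem copyCount_le_choose_of_finset_sup_eq_top [Finite γ] (S : Finset F.Subgraph)
    (hS : S.sup id = ⊤) (hiso : ∀ A ∈ S, Nonempty (A.coe ≃g J)) :
    copyCount F K ≤ (copyCount J K).choose S.card := by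
  classical
  have hfin := Set.toFinite {B : K.Subgraph | Nonempty (B.coe ≃g J)}
  set T := (hfin.toFinset.powersetCard S.card).image (fun U => U.sup id)
  have hsub : {B : K.Subgraph | Nonempty (B.coe ≃g F)} ⊆ T := by
    rintro B ⟨e⟩
    obtain ⟨f, rfl⟩ : B ∈ Set.range (Copy.toSubgraph (A := F)) := by
      rw [Copy.range_toSubgraph]; exact ⟨e.symm⟩
    have hsup : (S.image (Subgraph.map f.toHom)).sup id = f.toSubgraph := by
      rw [Finset.sup_image, Function.id_comp, ← Function.comp_id (Subgraph.map f.toHom),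
        ← Subgraph.map_finset_sup, hS]
    refine Finset.mem_image.mpr ⟨S.image (Subgraph.map f.toHom),
      Finset.mem_powersetCard.mpr ⟨?_, ?_⟩, hsup⟩
    · intro C hC
      obtain ⟨A, hA, rfl⟩ := Finset.mem_image.mp hC
      simpa using ⟨(f.isoSubgraphMap A).symm.trans (hiso A hA).some⟩
    · exact Finset.card_image_of_injective _ (Subgraph.map_injective_of_injective f.injective)
  calc copyCount F K ≤ T.card := by
        rw [_root_.copyCount, ← Set.ncard_coe_finset]; exact Set.ncard_le_ncard hsub
    _ ≤ (hfin.toFinset.powersetCard S.card).card := Finset.card_image_le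
    _ = (copyCount J K).choose S.card := by
        rw [Finset.card_powersetCard, _root_.copyCount, Set.ncard_eq_toFinset_card _ hfin]

theorem copyCount_finset_sup_le_choose {V : Type*} {H : SimpleGraph V} [Finite γ]
    (S : Finset H.Subgraph) (hiso : ∀ A ∈ S, Nonempty (A.coe ≃g J)) :
    copyCount (S.sup id).coe K ≤ (copyCount J K).choose S.card := by
  classical
  set I := S.sup id
  have hrestrict : ∀ A ∈ S, Subgraph.coeSubgraph (I.restrict A) = A := fun A hA =>
    Subgraph.coeSubgraph_restrict_of_le (Finset.le_sup (f := id) hA)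
  have hcard : (S.image I.restrict).card = S.card :=
    Finset.card_image_of_injOn fun A hA B hB h => by
      rw [← hrestrict A hA, ← hrestrict B hB]
      exact congrArg _ h
  rw [← hcard]
  refine copyCount_le_choose_of_finset_sup_eq_top _ ?_ ?_
  · apply Subgraph.coeSubgraph_injective I
    change Subgraph.map I.hom _ = Subgraph.map I.hom ⊤
    rw [Subgraph.map_finset_sup, Finset.sup_image, Subgraph.map_hom_top]
    exact Finset.sup_congr rfl hrestrict
  · intro B hB
    obtain ⟨A, hA, rfl⟩ := Finset.mem_image.mp hB
    have e := I.coeCopy.isoSubgraphMap (I.restrict A)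
    rw [show (I.restrict A).map I.coeCopy.toHom = A from hrestrict A hA] at e
    exact ⟨e.trans (hiso A hA).some⟩

end Counting

open scoped Nat in
lemma factorial_le_pow_of_one_le_mul_pow {N M t m : ℕ} {q : ℝ} (hq : 0 ≤ q)
    (hM : M ≤ N.choose t) (h : 1 ≤ M * q ^ (t * m)) : (t ! : ℝ) ≤ (N * q ^ m) ^ t := by
  have hchoose : (N.choose t : ℝ) * t ! ≤ N ^ t :=
    (le_div_iff₀ (by positivity)).mp (Nat.choose_le_pow_div t N)
  calc (t ! : ℝ) ≤ (M * q ^ (t * m)) * t ! := le_mul_of_one_le_left (by positivity) h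
    _ ≤ (N.choose t * q ^ (t * m)) * t ! := by gcongr
    _ = (N.choose t * t !) * q ^ (t * m) := by ring
    _ ≤ N ^ t * q ^ (t * m) := by gcongr
    _ = (N * q ^ m) ^ t := by rw [mul_pow, ← pow_mul, mul_comm m]

open scoped Nat in
lemma le_exp_one_mul_of_factorial_le_pow {t : ℕ} {x : ℝ} (hx : 0 ≤ x) (h : (t ! : ℝ) ≤ x ^ t) :
    (t : ℝ) ≤ Real.exp 1 * x := by
  rcases Nat.eq_zero_or_pos t with rfl | ht
  · simpa using mul_nonneg (Real.exp_pos 1).le hx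
  refine le_of_pow_le_pow_left₀ ht.ne' (by positivity) ?_
  calc (t : ℝ) ^ t ≤ Real.exp t * t ! :=
        (div_le_iff₀ (by positivity)).mp (Real.pow_div_factorial_le_exp _ t.cast_nonneg t)
    _ ≤ Real.exp t * x ^ t := by gcongr
    _ = (Real.exp 1 * x) ^ t := by rw [mul_pow, Real.exp_one_pow]

theorem edge_disjoint_copies_bound_general {n : ℕ} (q : ℝ) (hq0 : 0 ≤ q)
    (H : SimpleGraph (Fin n)) (hH : qSparse q H)
    {α : Type*} (J : SimpleGraph α)
    (S : Finset H.Subgraph)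
    (hiso : ∀ A ∈ S, Nonempty (SimpleGraph.Subgraph.coe A ≃g J))
    (hdisj : ∀ A ∈ S, ∀ B ∈ S, A ≠ B → A.edgeSet ∩ B.edgeSet = ∅) :
    (S.card : ℝ) ≤ Real.exp 1 * expCopies n J q := by
  have hedges : (S.sup id).coe.edgeSet.ncard = S.card * J.edgeSet.ncard := by
    rw [Subgraph.ncard_edgeSet_coe, Subgraph.ncard_edgeSet_finset_sup S
      fun A hA B hB hAB => Set.disjoint_iff_inter_eq_empty.mpr (hdisj A hA B hB hAB),
      Finset.sum_const_nat fun A hA => Subgraph.ncard_edgeSet_eq_of_iso (hiso A hA).some]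
  have hsparse := hH (S.sup id)
  rw [expCopies, hedges] at hsparse
  refine le_exp_one_mul_of_factorial_le_pow (by unfold expCopies; positivity) ?_
  exact factorial_le_pow_of_one_le_mul_pow hq0 (copyCount_finset_sup_le_choose S hiso) hsparse

/-- If `H` is `q`-sparse, then for any graph `J`, any collection of pairwise edge-disjoint
copies of `J` in `H` has size at most `e · E_q X_J`; that is, `ν(H,J) ≤ e · E_q X_J`. -/
theorem edge_disjoint_copies_bound {n : ℕ} (q : ℝ) (hq0 : 0 ≤ q) (hq1 : q ≤ 1)
    (H : SimpleGraph (Fin n)) (hH : qSparse q H)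
    {α : Type*} (J : SimpleGraph α)
    (S : Finset H.Subgraph)
    (hiso : ∀ A ∈ S, Nonempty (SimpleGraph.Subgraph.coe A ≃g J))
    (hdisj : ∀ A ∈ S, ∀ B ∈ S, A ≠ B → A.edgeSet ∩ B.edgeSet = ∅) :
    (S.card : ℝ) ≤ Real.exp 1 * expCopies n J q :=
  edge_disjoint_copies_bound_general q hq0 H hH J S hiso hdisj
end

section
/- Let H be a q-sparse graph on n vertices with 1/n < q < 1/√n, let x ≠ y be vertices, and let K_0,…,K_m be (x,y)-paths with ℓ edges each, chosen greedily so that each K_i (i ≥ 1) minimizes the number of new edges |K_i \ ∪_{j<i} K_j| among paths not contained in ∪_{j<i} K_j, with the union R containing all (x,y)-paths of length ℓ. If (nq)^ℓ < n^{1−δc} (where nq = n^c, δ ∈ (0,1)) and K is an (x,y)-path of length ℓ not among K_0,…,K_m, then there exists i ∈ [0,m] with |K ∩ K_i| ≥ ℓ/8 (intersection measured in edges). -/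
/-!
Suppose every `K_i` meets `Q` in fewer than `ℓ/8` edges, and let `N` be least such that
`Q ⊆ K_0 ∪ ⋯ ∪ K_{N-1} =: U`; by pigeonhole `N > 8`. Each `K_k` with `1 ≤ k < N` has both
endpoints already covered and brings a new edge, so it adds more new edges than new vertices:
`e(U) - v(U) ≥ N - 2`. By greedy minimality each of the last three paths adds at most as many
new edges as `Q` still misses, which is less than `ℓ/8` per remaining path; so together they add
fewer than `ℓ` new edges and `e(U) ≤ (N - 2) ℓ`. Sparsity of `H` applied to `U` gives
`1 ≤ n^{v(U)} q^{e(U)}`, i.e. `e(U) - v(U) ≤ c e(U) ≤ (N - 2) c ℓ < N - 2`, as `c ℓ < 1`.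
-/

open SimpleGraph

def walkEdges {n : ℕ} {H : SimpleGraph (Fin n)} {x y : Fin n} (p : H.Walk x y) :
    Finset (Sym2 (Fin n)) := p.edges.toFinset

def prevUnion {n m : ℕ} {H : SimpleGraph (Fin n)} {x y : Fin n}
    (K : Fin (m + 1) → H.Walk x y) (i : Fin (m + 1)) : Finset (Sym2 (Fin n)) :=
  (Finset.univ.filter fun j => j < i).biUnion fun j => walkEdges (K j)

open Finset

section PrefixUnion

variable {α : Type*} [DecidableEq α]

def prefixUnion (E : ℕ → Finset α) (k : ℕ) : Finset α := (range k).biUnion E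

variable (E : ℕ → Finset α)

theorem prefixUnion_succ (k : ℕ) : prefixUnion E (k + 1) = prefixUnion E k ∪ E k := by
  rw [prefixUnion, prefixUnion, range_add_one, biUnion_insert, union_comm]

theorem card_prefixUnion_succ (k : ℕ) :
    #(prefixUnion E (k + 1)) = #(prefixUnion E k) + #(E k \ prefixUnion E k) := by
  rw [prefixUnion_succ, ← union_sdiff_self_eq_union, card_union_of_disjoint disjoint_sdiff]

theorem card_prefixUnion_le {ℓ : ℕ} (hE : ∀ j, #(E j) ≤ ℓ) (k : ℕ) :
    #(prefixUnion E k) ≤ k * ℓ :=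
  calc #(prefixUnion E k) ≤ ∑ j ∈ range k, #(E j) := card_biUnion_le
    _ ≤ ∑ _j ∈ range k, ℓ := sum_le_sum fun j _ => hE j
    _ = k * ℓ := by simp

theorem card_sdiff_prefixUnion_le_sum {Q : Finset α} {N : ℕ} (hQ : Q ⊆ prefixUnion E N)
    (k : ℕ) : #(Q \ prefixUnion E k) ≤ ∑ j ∈ Ico k N, #(Q ∩ E j) := by
  refine (card_le_card fun a ha => ?_).trans card_biUnion_le
  obtain ⟨haQ, hak⟩ := mem_sdiff.1 ha
  obtain ⟨j, hjN, haj⟩ := mem_biUnion.1 (hQ haQ)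
  have hkj : k ≤ j := by
    by_contra h
    exact hak (mem_biUnion.2 ⟨j, mem_range.2 (by omega), haj⟩)
  exact mem_biUnion.2 ⟨j, mem_Ico.2 ⟨hkj, mem_range.1 hjN⟩, mem_inter.2 ⟨haQ, haj⟩⟩

theorem lt_of_subset_prefixUnion {Q : Finset α} {N ℓ r : ℕ} (hQ : ℓ ≤ #Q)
    (hQN : Q ⊆ prefixUnion E N) (hsmall : ∀ j, r * #(Q ∩ E j) < ℓ) : r < N := by
  have hN : N ≠ 0 := by
    rintro rfl
    have hQ0 : Q = ∅ := subset_empty.1 (by simpa [prefixUnion] using hQN)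
    have := hsmall 0
    simp only [hQ0, card_empty] at hQ
    omega
  have hcover := card_sdiff_prefixUnion_le_sum E hQN 0
  rw [prefixUnion, range_zero, biUnion_empty, sdiff_empty, ← range_eq_Ico] at hcover
  refine Nat.lt_of_mul_lt_mul_right (a := ℓ) ?_
  calc r * ℓ ≤ ∑ j ∈ range N, r * #(Q ∩ E j) := by
        rw [← mul_sum]; exact Nat.mul_le_mul_left _ (hQ.trans hcover)
    _ < ∑ _j ∈ range N, ℓ := sum_lt_sum_of_nonempty (nonempty_range_iff.2 hN) fun j _ => hsmall j
    _ = N * ℓ := by simp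

-- The last three paths add fewer than `(1 + 2 + 3) ℓ / 6 = ℓ` new edges.
theorem card_prefixUnion_add_le_of_greedy {Q : Finset α} {N ℓ : ℕ} (hN : 4 ≤ N)
    (hE : ∀ j, #(E j) ≤ ℓ) (hQN : Q ⊆ prefixUnion E N) (hsmall : ∀ j, 6 * #(Q ∩ E j) < ℓ)
    (hgreedy : ∀ k, 1 ≤ k → k < N → #(E k \ prefixUnion E k) ≤ #(Q \ prefixUnion E k)) :
    #(prefixUnion E N) + 2 * ℓ ≤ N * ℓ := by
  obtain ⟨k, rfl⟩ : ∃ k, N = k + 4 := ⟨N - 4, by omega⟩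
  have hnew : ∀ t < 3, #(E (k + 1 + t) \ prefixUnion E (k + 1 + t)) ≤
      ∑ j ∈ Ico (k + 1 + t) (k + 4), #(Q ∩ E j) := fun t ht =>
    (hgreedy (k + 1 + t) (by omega) (by omega)).trans (card_sdiff_prefixUnion_le_sum E hQN _)
  have h1 := hnew 0 (by norm_num)
  have h2 := hnew 1 (by norm_num)
  have h3 := hnew 2 (by norm_num)
  simp only [add_zero, sum_Ico_eq_sum_range, Nat.reduceSubDiff, add_tsub_cancel_left, add_assoc,
    sum_range_succ, range_one, sum_singleton, Nat.reduceAdd, Nat.Ico_succ_singleton] at h1 h2 h3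
  have hs1 : #(prefixUnion E (k + 2)) = _ := card_prefixUnion_succ E (k + 1)
  have hs2 : #(prefixUnion E (k + 3)) = _ := card_prefixUnion_succ E (k + 2)
  have hs3 : #(prefixUnion E (k + 4)) = _ := card_prefixUnion_succ E (k + 3)
  have hstart := card_prefixUnion_le E hE (k + 1)
  have := hsmall (k + 1)
  have := hsmall (k + 2)
  have := hsmall (k + 3)
  have : (k + 4) * ℓ = (k + 1) * ℓ + 3 * ℓ := by ring
  omega

theorem exists_card_prefixUnion_add_le_of_greedy {Q : Finset α} {M ℓ : ℕ}
    (hE : ∀ j, #(E j) ≤ ℓ) (hQ : ℓ ≤ #Q) (hsmall : ∀ j, 6 * #(Q ∩ E j) < ℓ)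
    (hQM : Q ⊆ prefixUnion E M)
    (hgreedy : ∀ k, 1 ≤ k → k < M → ¬ Q ⊆ prefixUnion E k →
      #(E k \ prefixUnion E k) ≤ #(Q \ prefixUnion E k)) :
    ∃ N ≤ M, 6 < N ∧ #(prefixUnion E N) + 2 * ℓ ≤ N * ℓ := by
  have hex : ∃ N, Q ⊆ prefixUnion E N := ⟨M, hQM⟩
  have hQN := Nat.find_spec hex
  have hNM : Nat.find hex ≤ M := Nat.find_min' hex hQM
  have hN := lt_of_subset_prefixUnion E hQ hQN hsmall
  exact ⟨Nat.find hex, hNM, hN, card_prefixUnion_add_le_of_greedy E (by omega) hE hQN hsmall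
    fun k hk hkN => hgreedy k hk (by omega) (Nat.find_min hex hkN)⟩

end PrefixUnion

namespace SimpleGraph.Walk

variable {V : Type*} [DecidableEq V] {G : SimpleGraph V} {T : Finset (Sym2 V)} {W : Finset V}

theorem card_edges_toFinset_le {u v : V} (p : G.Walk u v) : #p.edges.toFinset ≤ p.length :=
  (List.toFinset_card_le _).trans p.length_edges.le

theorem card_support_toFinset_le {u v : V} (p : G.Walk u v) :
    #p.support.toFinset ≤ p.length + 1 :=
  (List.toFinset_card_le _).trans p.length_support.le

theorem IsTrail.card_edges_toFinset {u v : V} {p : G.Walk u v} (hp : p.IsTrail) :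
    #p.edges.toFinset = p.length := by
  rw [List.toFinset_card_of_nodup hp.edges_nodup, length_edges]

theorem card_support_sdiff_le_card_edges_sdiff (hT : ∀ e ∈ T, ∀ v ∈ e, v ∈ W) {u v : V}
    (p : G.Walk u v) (hp : p.IsTrail) (hv : v ∈ W) :
    #(p.support.toFinset \ W) ≤ #(p.edges.toFinset \ T) := by
  induction p with
  | nil => simp [hv]
  | @cons u w v huw p ih =>
    rw [isTrail_cons] at hp
    rw [support_cons, edges_cons, List.toFinset_cons, List.toFinset_cons]
    by_cases hu : u ∈ W
    · rw [insert_sdiff_of_mem _ hu]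
      exact (ih hp.1 hv).trans (card_le_card (sdiff_subset_sdiff (subset_insert _ _) le_rfl))
    · have huwT : s(u, w) ∉ T := fun h => hu (hT _ h u (Sym2.mem_mk_left u w))
      rw [insert_sdiff_of_notMem _ huwT, insert_sdiff_of_notMem _ hu]
      calc #(insert u (p.support.toFinset \ W)) ≤ #(p.support.toFinset \ W) + 1 :=
            card_insert_le _ _
        _ ≤ #(p.edges.toFinset \ T) + 1 := Nat.succ_le_succ (ih hp.1 hv)
        _ = #(insert s(u, w) (p.edges.toFinset \ T)) :=
            (card_insert_of_notMem (by simp [hp.2])).symm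

theorem card_support_sdiff_lt_card_edges_sdiff (hT : ∀ e ∈ T, ∀ v ∈ e, v ∈ W) {u v : V}
    (p : G.Walk u v) (hp : p.IsTrail) (hu : u ∈ W) (hv : v ∈ W)
    (hnew : ¬ p.edges.toFinset ⊆ T) :
    #(p.support.toFinset \ W) < #(p.edges.toFinset \ T) := by
  induction p with
  | nil => simp at hnew
  | @cons u w v huw p ih =>
    rw [isTrail_cons] at hp
    rw [support_cons, List.toFinset_cons, insert_sdiff_of_mem _ hu]
    rw [edges_cons, List.toFinset_cons] at hnew ⊢
    by_cases huwT : s(u, w) ∈ T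
    · rw [insert_sdiff_of_mem _ huwT]
      exact ih hp.1 (hT _ huwT w (Sym2.mem_mk_right u w)) hv
        fun h => hnew (insert_subset huwT h)
    · rw [insert_sdiff_of_notMem _ huwT, card_insert_of_notMem (by simp [hp.2])]
      exact Nat.lt_succ_of_le (card_support_sdiff_le_card_edges_sdiff hT p hp.1 hv)

end SimpleGraph.Walk

section WalkFamily

variable {V : Type*} [DecidableEq V] {G : SimpleGraph V} {x y : V}

theorem mem_prefixUnion_support_of_mem_edges (P : ℕ → G.Walk x y) {k : ℕ} {e : Sym2 V}
    (he : e ∈ prefixUnion (fun j => (P j).edges.toFinset) k) {v : V} (hv : v ∈ e) :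
    v ∈ prefixUnion (fun j => (P j).support.toFinset) k := by
  obtain ⟨j, hj, hej⟩ := mem_biUnion.1 he
  exact mem_biUnion.2 ⟨j, hj, List.mem_toFinset.2 ((P j).mem_support_of_mem_edges
    (List.mem_toFinset.1 hej) hv)⟩

theorem card_prefixUnion_support_add_le (P : ℕ → G.Walk x y) (hP : ∀ j, (P j).IsTrail)
    {N : ℕ} (hN : 1 ≤ N)
    (hnew : ∀ k, 1 ≤ k → k < N →
      ¬ (P k).edges.toFinset ⊆ prefixUnion (fun j => (P j).edges.toFinset) k) :
    #(prefixUnion (fun j => (P j).support.toFinset) N) + N ≤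
      #(prefixUnion (fun j => (P j).edges.toFinset) N) + 2 := by
  induction N, hN using Nat.le_induction with
  | base =>
    simp only [prefixUnion, range_one, singleton_biUnion, (hP 0).card_edges_toFinset]
    have := (P 0).card_support_toFinset_le
    omega
  | succ k hk ih =>
    have hx : x ∈ prefixUnion (fun j => (P j).support.toFinset) k :=
      mem_biUnion.2 ⟨0, mem_range.2 hk, List.mem_toFinset.2 (P 0).start_mem_support⟩
    have hy : y ∈ prefixUnion (fun j => (P j).support.toFinset) k :=
      mem_biUnion.2 ⟨0, mem_range.2 hk, List.mem_toFinset.2 (P 0).end_mem_support⟩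
    have hstep := (P k).card_support_sdiff_lt_card_edges_sdiff
      (fun e he v hv => mem_prefixUnion_support_of_mem_edges P he hv) (hP k) hx hy
      (hnew k hk (Nat.lt_succ_self k))
    have hV := card_prefixUnion_succ (fun j => (P j).support.toFinset) k
    have hE := card_prefixUnion_succ (fun j => (P j).edges.toFinset) k
    have := ih fun j hj hjk => hnew j hj (Nat.lt_succ_of_lt hjk)
    omega

theorem verts_iSup_toSubgraph (P : ℕ → G.Walk x y) (N : ℕ) :
    (⨆ j ∈ range N, (P j).toSubgraph).verts =
      ↑(prefixUnion (fun j => (P j).support.toFinset) N) := by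
  ext v; simp [prefixUnion]

theorem edgeSet_iSup_toSubgraph (P : ℕ → G.Walk x y) (N : ℕ) :
    (⨆ j ∈ range N, (P j).toSubgraph).edgeSet =
      ↑(prefixUnion (fun j => (P j).edges.toFinset) N) := by
  ext e; simp [prefixUnion]

end WalkFamily

theorem copyCount_le_pow {α β : Type*} [Finite α] [Finite β] (J : SimpleGraph α)
    (G : SimpleGraph β) : _root_.copyCount J G ≤ Nat.card β ^ Nat.card α := by
  have hrange :
      {A : G.Subgraph | Nonempty (A.coe ≃g J)} = Set.range (Copy.toSubgraph (A := J)) := by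
    rw [Copy.range_toSubgraph]
    exact Set.ext fun A => ⟨Nonempty.map Iso.symm, Nonempty.map Iso.symm⟩
  have : Finite (Copy J G) := Finite.of_injective _ DFunLike.coe_injective
  calc _root_.copyCount J G = Nat.card (Set.range (Copy.toSubgraph (A := J) (B := G))) := by
        rw [_root_.copyCount, hrange, Nat.card_coe_set_eq]
    _ ≤ Nat.card (Copy J G) := Finite.card_range_le _
    _ ≤ Nat.card (α → β) := Nat.card_le_card_of_injective _ DFunLike.coe_injective
    _ = Nat.card β ^ Nat.card α := Nat.card_fun

theorem qSparse.one_le_pow_mul_pow {n : ℕ} {q : ℝ} {H : SimpleGraph (Fin n)}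
    (hsp : qSparse q H) (I : H.Subgraph) :
    1 ≤ (n : ℝ) ^ I.verts.ncard * q ^ I.edgeSet.ncard := by
  have hedges : I.coe.edgeSet.ncard = I.edgeSet.ncard := by
    rw [← Subgraph.image_coe_edgeSet_coe,
      Set.ncard_image_of_injective _ (Sym2.map.injective Subtype.val_injective)]
  have hexp := hsp I
  rw [expCopies, hedges] at hexp
  have hcopies := copyCount_le_pow I.coe (⊤ : SimpleGraph (Fin n))
  rw [Nat.card_eq_fintype_card, Fintype.card_fin, Nat.card_coe_set_eq] at hcopies
  have hq : 0 < q ^ I.edgeSet.ncard := pos_of_mul_pos_right (one_pos.trans_le hexp) (by positivity)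
  exact hexp.trans (by gcongr; exact_mod_cast hcopies)

theorem qSparse.one_le_pow_card_support_mul_pow_card_edges {n : ℕ} {q : ℝ}
    {H : SimpleGraph (Fin n)} (hsp : qSparse q H) {x y : Fin n} (P : ℕ → H.Walk x y) (N : ℕ) :
    1 ≤ (n : ℝ) ^ #(prefixUnion (fun j => (P j).support.toFinset) N) *
      q ^ #(prefixUnion (fun j => (P j).edges.toFinset) N) := by
  have h := hsp.one_le_pow_mul_pow (⨆ j ∈ range N, (P j).toSubgraph)
  rwa [verts_iSup_toSubgraph, edgeSet_iSup_toSubgraph, Set.ncard_coe_finset,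
    Set.ncard_coe_finset] at h

theorem le_add_mul_of_one_le_pow_mul_pow {n q c : ℝ} {v e : ℕ} (hn : 1 < n) (hc : n * q = n ^ c)
    (h : 1 ≤ n ^ v * q ^ e) : (e : ℝ) ≤ v + c * e := by
  have hn0 : 0 < n := zero_lt_one.trans hn
  have : n ^ (e : ℝ) ≤ n ^ ((v : ℝ) + c * e) := by
    calc n ^ (e : ℝ) = n ^ e * 1 := by rw [Real.rpow_natCast, mul_one]
      _ ≤ n ^ e * (n ^ v * q ^ e) := by gcongr
      _ = n ^ v * (n * q) ^ e := by ring
      _ = n ^ ((v : ℝ) + c * e) := by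
        rw [hc, Real.rpow_add hn0, Real.rpow_mul hn0.le, Real.rpow_natCast, Real.rpow_natCast]
  exact (Real.rpow_le_rpow_left_iff hn).1 this

theorem add_lt_add_of_le_add_mul {N ℓ e v : ℕ} {c δ : ℝ} (hN : 2 < N) (hδ : 0 < δ)
    (hcℓ : c * ℓ < 1 - δ * c) (hedges : e + 2 * ℓ ≤ N * ℓ) (hsparse : (e : ℝ) ≤ v + c * e) :
    e + 2 < v + N := by
  by_contra! hexcess
  have he : (e : ℝ) + 2 * ℓ ≤ N * ℓ := by exact_mod_cast hedges
  have hv : (v : ℝ) + N ≤ e + 2 := by exact_mod_cast hexcess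
  have hN' : (2 : ℝ) < N := by exact_mod_cast hN
  have hc : 0 < c := by nlinarith [(Nat.cast_nonneg e : (0 : ℝ) ≤ e)]
  have hcℓ1 : c * ℓ < 1 := by nlinarith [mul_pos hδ hc]
  nlinarith [mul_le_mul_of_nonneg_left he hc.le]

section FinClamp

variable {α : Type*} [DecidableEq α] {m : ℕ}

theorem Fin.clamp_val (j : Fin (m + 1)) : Fin.clamp j m = j :=
  Fin.ext (min_eq_left (Nat.lt_succ_iff.1 j.isLt))

theorem biUnion_filter_lt_eq_prefixUnion (f : Fin (m + 1) → Finset α) (i : Fin (m + 1)) :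
    (univ.filter fun j => j < i).biUnion f = prefixUnion (fun j => f (Fin.clamp j m)) i := by
  ext a
  simp only [mem_biUnion, mem_filter, mem_univ, true_and, prefixUnion, mem_range]
  constructor
  · rintro ⟨j, hj, ha⟩
    exact ⟨j, hj, by rwa [Fin.clamp_val]⟩
  · rintro ⟨j, hj, ha⟩
    exact ⟨Fin.clamp j m, by rw [Fin.lt_def, Fin.coe_clamp]; omega, ha⟩

theorem biUnion_univ_eq_prefixUnion (f : Fin (m + 1) → Finset α) :
    univ.biUnion f = prefixUnion (fun j => f (Fin.clamp j m)) (m + 1) := by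
  ext a
  simp only [mem_biUnion, mem_univ, true_and, prefixUnion, mem_range]
  constructor
  · rintro ⟨j, ha⟩
    exact ⟨j, j.isLt, by rwa [Fin.clamp_val]⟩
  · rintro ⟨j, -, ha⟩
    exact ⟨Fin.clamp j m, ha⟩

end FinClamp

theorem greedy_path_cover_intersection_general
    (n m ℓ : ℕ) (q c δ : ℝ) (H : SimpleGraph (Fin n)) (x y : Fin n) (hxy : x ≠ y)
    (hc : (n : ℝ) * q = (n : ℝ) ^ c) (hδ0 : 0 < δ)
    (hsp : qSparse q H)
    (hell : ((n : ℝ) * q) ^ ℓ < (n : ℝ) ^ (1 - δ * c))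
    (K : Fin (m + 1) → H.Walk x y)
    (hKpath : ∀ i, (K i).IsPath ∧ (K i).length = ℓ)
    (hKnew : ∀ i : Fin (m + 1), 0 < (i : ℕ) → ¬ walkEdges (K i) ⊆ prevUnion K i)
    (hKmin : ∀ i : Fin (m + 1), 0 < (i : ℕ) →
      ∀ Q : H.Walk x y, Q.IsPath → Q.length = ℓ → ¬ walkEdges Q ⊆ prevUnion K i →
        (walkEdges (K i) \ prevUnion K i).card ≤ (walkEdges Q \ prevUnion K i).card)
    (hcover : ∀ Q : H.Walk x y, Q.IsPath → Q.length = ℓ →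
      walkEdges Q ⊆ Finset.univ.biUnion fun j => walkEdges (K j)) :
    ∀ Q : H.Walk x y, Q.IsPath → Q.length = ℓ →
      (∀ i, walkEdges Q ≠ walkEdges (K i)) →
      ∃ i, (ℓ : ℝ) / 8 ≤ ((walkEdges Q ∩ walkEdges (K i)).card : ℝ) := by
  intro Q hQpath hQlen _
  by_contra! hfar
  let P : ℕ → H.Walk x y := fun j => K (Fin.clamp j m)
  let E : ℕ → Finset (Sym2 (Fin n)) := fun j => (P j).edges.toFinset
  have hprev : ∀ k ≤ m, prevUnion K (Fin.clamp k m) = prefixUnion E k := fun k hk => by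
    rw [prevUnion, biUnion_filter_lt_eq_prefixUnion, Fin.coe_clamp, min_eq_left hk]; rfl
  have hsmall : ∀ j, 6 * #(walkEdges Q ∩ E j) < ℓ := fun j => by
    have h : (#(walkEdges Q ∩ E j) : ℝ) < ℓ / 8 := hfar (Fin.clamp j m)
    have : 8 * #(walkEdges Q ∩ E j) < ℓ := by
      exact_mod_cast (by linarith : (8 * #(walkEdges Q ∩ E j) : ℝ) < ℓ)
    omega
  obtain ⟨N, hNm, hN, hedges⟩ := exists_card_prefixUnion_add_le_of_greedy E
    (fun j => (P j).card_edges_toFinset_le.trans_eq (hKpath _).2)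
    (hQpath.isTrail.card_edges_toFinset.trans hQlen).ge hsmall
    (biUnion_univ_eq_prefixUnion (fun j => walkEdges (K j)) ▸ hcover Q hQpath hQlen)
    fun k hk hkm hQk => by
      have h := hKmin (Fin.clamp k m) (by simp; omega) Q hQpath hQlen
      rw [hprev k (by omega)] at h
      exact h hQk
  have hverts := card_prefixUnion_support_add_le P (fun j => (hKpath _).1.isTrail) (N := N)
    (by omega) fun k hk hkN => by
      have h := hKnew (Fin.clamp k m) (by simp; omega)
      rwa [hprev k (by omega)] at h
  have hn : (1 : ℝ) < n := by
    exact_mod_cast (by simpa using Fintype.one_lt_card_iff.2 ⟨x, y, hxy⟩ : 1 < n)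
  have hcℓ : c * ℓ < 1 - δ * c := by
    rw [hc, ← Real.rpow_natCast, ← Real.rpow_mul (by positivity)] at hell
    exact (Real.rpow_lt_rpow_left_iff hn).1 hell
  have hsparse := le_add_mul_of_one_le_pow_mul_pow hn hc
    (hsp.one_le_pow_card_support_mul_pow_card_edges P N)
  exact (add_lt_add_of_le_add_mul (by omega) hδ0 hcℓ hedges hsparse).not_ge hverts

/-- Greedy covering of the `(x,y)`-paths of length `ℓ` in a `q`-sparse graph: if
`K_0, …, K_m` are chosen greedily (each new `K_i` minimizing the number of new edges) and
their union contains every `(x,y)`-path of length `ℓ`, and `(nq)^ℓ < n^{1-δc}`, then every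
`(x,y)`-path `Q` of length `ℓ` not among the `K_i` shares at least `ℓ/8` edges with some
`K_i`. -/
theorem greedy_path_cover_intersection
    (n m ℓ : ℕ) (q c δ : ℝ) (H : SimpleGraph (Fin n)) (x y : Fin n) (hxy : x ≠ y)
    (hql : 1 / (n : ℝ) < q) (hqu : q < 1 / Real.sqrt n)
    (hc : (n : ℝ) * q = (n : ℝ) ^ c) (hδ0 : 0 < δ) (hδ1 : δ < 1)
    (hsp : qSparse q H)
    (hell : ((n : ℝ) * q) ^ ℓ < (n : ℝ) ^ (1 - δ * c))
    (K : Fin (m + 1) → H.Walk x y)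
    (hKpath : ∀ i, (K i).IsPath ∧ (K i).length = ℓ)
    (hKnew : ∀ i : Fin (m + 1), 0 < (i : ℕ) → ¬ walkEdges (K i) ⊆ prevUnion K i)
    (hKmin : ∀ i : Fin (m + 1), 0 < (i : ℕ) →
      ∀ Q : H.Walk x y, Q.IsPath → Q.length = ℓ → ¬ walkEdges Q ⊆ prevUnion K i →
        (walkEdges (K i) \ prevUnion K i).card ≤ (walkEdges Q \ prevUnion K i).card)
    (hcover : ∀ Q : H.Walk x y, Q.IsPath → Q.length = ℓ →
      walkEdges Q ⊆ Finset.univ.biUnion fun j => walkEdges (K j)) :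
    ∀ Q : H.Walk x y, Q.IsPath → Q.length = ℓ →
      (∀ i, walkEdges Q ≠ walkEdges (K i)) →
      ∃ i, (ℓ : ℝ) / 8 ≤ ((walkEdges Q ∩ walkEdges (K i)).card : ℝ) :=
  greedy_path_cover_intersection_general n m ℓ q c δ H x y hxy hc hδ0 hsp hell K hKpath hKnew hKmin
    hcover
end
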